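/- Let p be a prime and m ≥ 1 an integer, and let π : GL₂(ℤ_p) → GL₂(ℤ/p^mℤ) be the reduction homomorphism. Let H and R be finite-index subgroups of GL₂(ℤ_p) such that ker(π) ≤ R, and set H' := π⁻¹(π(H)). Then [R ∩ H' : R ∩ H] = [H' : H]. -/

import Mathlib

/-
Write `K = ker π`, a normal subgroup. Then `H' = H ⊔ K`, and since `K ≤ R` also
`R ∩ H' = (R ∩ H) ⊔ K`. For a normal `K`, the cosets of `A` in `A ⊔ K` are exactly the
`A`-cosets of elements of `K`, so `[A ⊔ K : A] = [K : A ∩ K]`; with `A = H` and `A = R ∩ H`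
both sides become `[K : H ∩ K]`, because `K ≤ R`.
-/

namespace Subgroup

variable {G G' : Type*} [Group G] [Group G']

theorem relIndex_eq_ncard_orbit (H K : Subgroup G) :
    H.relIndex K = (MulAction.orbit K ((1 : G) : G ⧸ H)).ncard := by
  rw [← MulAction.index_stabilizer, relIndex]
  congr 1
  ext k
  rw [mem_subgroupOf, MulAction.mem_stabilizer_iff]
  show _ ↔ ((k * 1 : G) : G ⧸ H) = ((1 : G) : G ⧸ H)
  rw [mul_one, eq_comm, QuotientGroup.eq, inv_one, one_mul]

theorem orbit_sup_of_normal_mk_one (H N : Subgroup G) [N.Normal] :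
    MulAction.orbit (H ⊔ N : Subgroup G) ((1 : G) : G ⧸ H) =
      MulAction.orbit N ((1 : G) : G ⧸ H) := by
  ext x
  constructor
  · rintro ⟨⟨g, hg⟩, rfl⟩
    rw [sup_comm, mem_sup_of_normal_left] at hg
    obtain ⟨n, hn, h, hh, rfl⟩ := hg
    refine ⟨⟨n, hn⟩, ?_⟩
    show ((n * 1 : G) : G ⧸ H) = ((n * h * 1 : G) : G ⧸ H)
    rw [QuotientGroup.eq]
    simpa using hh
  · rintro ⟨⟨n, hn⟩, rfl⟩
    exact ⟨⟨n, mem_sup_right hn⟩, rfl⟩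

theorem relIndex_sup_of_normal (H N : Subgroup G) [N.Normal] :
    H.relIndex (H ⊔ N) = H.relIndex N := by
  rw [relIndex_eq_ncard_orbit, relIndex_eq_ncard_orbit, orbit_sup_of_normal_mk_one]

theorem relIndex_comap_map (f : G →* G') (H : Subgroup G) :
    H.relIndex (comap f (map f H)) = H.relIndex f.ker := by
  rw [comap_map_eq, relIndex_sup_of_normal]

theorem inf_comap_map_of_ker_le {f : G →* G'} {R : Subgroup G} (hker : f.ker ≤ R)
    (H : Subgroup G) :
    R ⊓ comap f (map f H) = comap f (map f (R ⊓ H)) := by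
  ext x
  simp only [mem_inf, mem_comap, mem_map]
  constructor
  · rintro ⟨hxR, h, hh, hfx⟩
    have hxh : x⁻¹ * h ∈ R := hker (by simp [MonoidHom.mem_ker, hfx])
    exact ⟨h, ⟨by simpa using mul_mem hxR hxh, hh⟩, hfx⟩
  · rintro ⟨y, ⟨hyR, hyH⟩, hfy⟩
    have hyx : y⁻¹ * x ∈ R := hker (by simp [MonoidHom.mem_ker, hfy])
    exact ⟨by simpa using mul_mem hyR hyx, y, hyH, hfy⟩

theorem inf_relIndex_of_le_left {R H K : Subgroup G} (hK : K ≤ R) :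
    (R ⊓ H).relIndex K = H.relIndex K := by
  rw [← relIndex_inf_mul_relIndex, relIndex_eq_one.2 (inf_le_right.trans hK), one_mul]

end Subgroup

theorem relindex_inf_comap_map_eq_general (p : ℕ) [Fact p.Prime] (m : ℕ)
    (H R : Subgroup (GL (Fin 2) ℤ_[p]))
    (hker : (Matrix.GeneralLinearGroup.map (PadicInt.toZModPow m) :
        GL (Fin 2) ℤ_[p] →* GL (Fin 2) (ZMod (p ^ m))).ker ≤ R) :
    (R ⊓ H).relIndex
        (R ⊓ Subgroup.comap
          (Matrix.GeneralLinearGroup.map (PadicInt.toZModPow m) :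
            GL (Fin 2) ℤ_[p] →* GL (Fin 2) (ZMod (p ^ m)))
          (Subgroup.map
            (Matrix.GeneralLinearGroup.map (PadicInt.toZModPow m) :
              GL (Fin 2) ℤ_[p] →* GL (Fin 2) (ZMod (p ^ m))) H)) =
      H.relIndex
        (Subgroup.comap
          (Matrix.GeneralLinearGroup.map (PadicInt.toZModPow m) :
            GL (Fin 2) ℤ_[p] →* GL (Fin 2) (ZMod (p ^ m)))
          (Subgroup.map
            (Matrix.GeneralLinearGroup.map (PadicInt.toZModPow m) :
              GL (Fin 2) ℤ_[p] →* GL (Fin 2) (ZMod (p ^ m))) H)) := by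
  rw [Subgroup.inf_comap_map_of_ker_le hker, Subgroup.relIndex_comap_map,
    Subgroup.relIndex_comap_map, Subgroup.inf_relIndex_of_le_left hker]

/-- Let `π : GL₂(ℤ_p) → GL₂(ℤ/p^mℤ)` be the reduction homomorphism, let `H`, `R` be
finite-index subgroups of `GL₂(ℤ_p)` with `ker π ≤ R`, and set `H' := π⁻¹(π(H))`.
Then `[R ∩ H' : R ∩ H] = [H' : H]`. -/
theorem relindex_inf_comap_map_eq (p : ℕ) [Fact p.Prime] (m : ℕ) (hm : 1 ≤ m)
    (H R : Subgroup (GL (Fin 2) ℤ_[p])) (hHfin : H.FiniteIndex) (hRfin : R.FiniteIndex)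
    (hker : (Matrix.GeneralLinearGroup.map (PadicInt.toZModPow m) :
        GL (Fin 2) ℤ_[p] →* GL (Fin 2) (ZMod (p ^ m))).ker ≤ R) :
    (R ⊓ H).relIndex
        (R ⊓ Subgroup.comap
          (Matrix.GeneralLinearGroup.map (PadicInt.toZModPow m) :
            GL (Fin 2) ℤ_[p] →* GL (Fin 2) (ZMod (p ^ m)))
          (Subgroup.map
            (Matrix.GeneralLinearGroup.map (PadicInt.toZModPow m) :
              GL (Fin 2) ℤ_[p] →* GL (Fin 2) (ZMod (p ^ m))) H)) =
      H.relIndex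
        (Subgroup.comap
          (Matrix.GeneralLinearGroup.map (PadicInt.toZModPow m) :
            GL (Fin 2) ℤ_[p] →* GL (Fin 2) (ZMod (p ^ m)))
          (Subgroup.map
            (Matrix.GeneralLinearGroup.map (PadicInt.toZModPow m) :
              GL (Fin 2) ℤ_[p] →* GL (Fin 2) (ZMod (p ^ m))) H)) :=
  relindex_inf_comap_map_eq_general p m H R hker
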